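/- arXiv:2502.10612 — 6 statements merged into one kernel-verified Lean document; each statement's English description precedes it below -/
import Mathlib

section
/- Let Σ be a multisigned complete graph on n ≥ 5 vertices in which all Hamiltonian cycles have the same multisign. Then any two triangles sharing an edge have the same multisign: if l, m, p, q are distinct vertices, then σ(△lmq) = σ(△lpq). -/
/-- The multisign of the Hamiltonian cycle listed by the bijection `v`. -/
def hamMultisign {n m : ℕ} [NeZero n] (σ : Fin n → Fin n → (Fin m → ℤˣ))
    (v : Fin n → Fin n) : Fin m → ℤˣ :=
  ∏ k : Fin n, σ (v k) (v (k + 1))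

/-- The multisign of the triangle on vertices `a`, `b`, `c`. -/
def triMultisign {n m : ℕ} (σ : Fin n → Fin n → (Fin m → ℤˣ))
    (a b c : Fin n) : Fin m → ℤˣ :=
  σ a b * σ b c * σ c a

/-!
Transposing the two middle vertices of a path `a, b, c, d` inside a Hamiltonian cycle changes
only the edges `ab, bc, cd` into `ac, cb, bd`. As the multisign of the cycle does not change and
`σ` is symmetric, `σ(ab)·σ(cd) = σ(ac)·σ(bd)` for any four distinct vertices. Every multisign is
its own inverse, so this turns into `σ(lm)·σ(mq) = σ(lp)·σ(pq)`, and multiplying by `σ(ql)`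
compares the triangles.
-/

theorem mul_eq_mul_of_mul_eq_mul_of_mul_self_eq_one {G : Type*} [CommGroup G]
    (hG : ∀ g : G, g * g = 1) {x y z w : G} (h : x * y = z * w) : x * w = z * y :=
  calc x * w = x * y * (y * w) := by rw [mul_assoc, ← mul_assoc y, hG, one_mul]
    _ = z * y * (w * w) := by rw [h]; ac_rfl
    _ = z * y := by rw [hG, mul_one]

theorem Equiv.Perm.exists_apply_zero_one_two_three {n : ℕ} [NeZero n] {a b c d : Fin n}
    (hinj : Function.Injective ![a, b, c, d]) :
    ∃ τ : Equiv.Perm (Fin n), τ 0 = a ∧ τ 1 = b ∧ τ 2 = c ∧ τ 3 = d := by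
  have hn : 4 ≤ n := by simpa using Fintype.card_le_of_injective _ hinj
  have hpos : Function.Injective (![0, 1, 2, 3] : Fin 4 → Fin n) := by
    intro i j
    fin_cases i <;> fin_cases j <;> simp (disch := omega) [Fin.ext_iff, Nat.mod_eq_of_lt]
  obtain ⟨τ, hτ⟩ := Equiv.Perm.exists_extending_pair _ _ hpos hinj
  exact ⟨τ, hτ 0, hτ 1, hτ 2, hτ 3⟩

section

variable {n m : ℕ} [NeZero n] (σ : Fin n → Fin n → (Fin m → ℤˣ))

theorem hamMultisign_comp_swap_eq_iff (hn : 4 ≤ n) (v : Fin n → Fin n) (i : Fin n) :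
    hamMultisign σ (v ∘ Equiv.swap (i + 1) (i + 2)) = hamMultisign σ v ↔
      σ (v i) (v (i + 2)) * σ (v (i + 2)) (v (i + 1)) * σ (v (i + 1)) (v (i + 3)) =
        σ (v i) (v (i + 1)) * σ (v (i + 1)) (v (i + 2)) * σ (v (i + 2)) (v (i + 3)) := by
  obtain ⟨h31, h32, h01, h02, h12, h112, h213⟩ : i + 3 ≠ i + 1 ∧ i + 3 ≠ i + 2 ∧ i ≠ i + 1 ∧
      i ≠ i + 2 ∧ i + 1 ≠ i + 2 ∧ i + 1 + 1 = i + 2 ∧ i + 2 + 1 = i + 3 := by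
    simp only [Ne, add_assoc, add_right_inj, left_eq_add]
    simp (disch := omega) [Fin.ext_iff, Fin.val_add, Nat.mod_eq_of_lt]
  set S : Finset (Fin n) := {i, i + 1, i + 2}
  have hcompl : ∀ k ∈ Sᶜ, σ ((v ∘ Equiv.swap (i + 1) (i + 2)) k)
      ((v ∘ Equiv.swap (i + 1) (i + 2)) (k + 1)) = σ (v k) (v (k + 1)) := by
    intro k hk
    simp only [S, Finset.mem_compl, Finset.mem_insert, Finset.mem_singleton, not_or] at hk
    obtain ⟨hki, hki1, hki2⟩ := hk
    have hk1 : k + 1 ≠ i + 1 := fun h => hki (add_right_cancel h)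
    have hk2 : k + 1 ≠ i + 2 := fun h => hki1 (add_right_cancel (h.trans h112.symm))
    simp only [Function.comp_apply, Equiv.swap_apply_of_ne_of_ne hki1 hki2,
      Equiv.swap_apply_of_ne_of_ne hk1 hk2]
  have hi : i ∉ ({i + 1, i + 2} : Finset (Fin n)) := by simp [h01, h02]
  have hi1 : i + 1 ∉ ({i + 2} : Finset (Fin n)) := by simp [h12]
  rw [hamMultisign, hamMultisign, ← Finset.prod_mul_prod_compl S, ← Finset.prod_mul_prod_compl S,
    Finset.prod_congr rfl hcompl, mul_left_inj]
  simp only [S, Finset.prod_insert hi, Finset.prod_insert hi1, Finset.prod_singleton, h112, h213,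
    Function.comp_apply, Equiv.swap_apply_left, Equiv.swap_apply_right,
    Equiv.swap_apply_of_ne_of_ne h01 h02, Equiv.swap_apply_of_ne_of_ne h31 h32, mul_assoc]

theorem mul_eq_mul_of_forall_hamMultisign_eq (hsym : ∀ a b, σ a b = σ b a)
    (hham : ∀ v w : Fin n → Fin n, Function.Bijective v → Function.Bijective w →
      hamMultisign σ v = hamMultisign σ w)
    {a b c d : Fin n} (hinj : Function.Injective ![a, b, c, d]) :
    σ a b * σ c d = σ a c * σ b d := by
  have hn : 4 ≤ n := by simpa using Fintype.card_le_of_injective _ hinj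
  obtain ⟨τ, ha, hb, hc, hd⟩ := Equiv.Perm.exists_apply_zero_one_two_three hinj
  have hswap := (hamMultisign_comp_swap_eq_iff σ hn τ 0).mp
    (hham _ _ (τ.bijective.comp (Equiv.swap _ _).bijective) τ.bijective)
  simp only [zero_add, ha, hb, hc, hd, hsym c b] at hswap
  rwa [mul_right_comm, mul_right_comm (σ a b), mul_left_inj, eq_comm] at hswap

end

theorem triangles_sharing_edge_same_multisign_general (n m : ℕ) [NeZero n]
    (σ : Fin n → Fin n → (Fin m → ℤˣ))
    (hsym : ∀ a b, σ a b = σ b a)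
    (hham : ∀ v w : Fin n → Fin n, Function.Bijective v → Function.Bijective w →
      hamMultisign σ v = hamMultisign σ w)
    (l m' p q : Fin n)
    (hlm : l ≠ m') (hlp : l ≠ p) (hlq : l ≠ q)
    (hmp : m' ≠ p) (hmq : m' ≠ q) (hpq : p ≠ q) :
    triMultisign σ l m' q = triMultisign σ l p q := by
  have hinj : Function.Injective ![l, m', p, q] := by
    intro i j
    fin_cases i <;> fin_cases j <;> simp [hlm, hlp, hlq, hmp, hmq, hpq, Ne.symm]
  have hmatch := mul_eq_mul_of_forall_hamMultisign_eq σ hsym hham hinj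
  have hpath : σ l m' * σ m' q = σ l p * σ p q :=
    mul_eq_mul_of_mul_eq_mul_of_mul_self_eq_one
      (fun x => funext fun i => Int.units_mul_self (x i)) hmatch
  rw [triMultisign, triMultisign, hpath]

/-- If all Hamiltonian cycles have the same multisign, then two triangles
sharing an edge have the same multisign. -/
theorem triangles_sharing_edge_same_multisign (n m : ℕ) (hn : 5 ≤ n) [NeZero n]
    (σ : Fin n → Fin n → (Fin m → ℤˣ))
    (hsym : ∀ a b, σ a b = σ b a)
    (hham : ∀ v w : Fin n → Fin n, Function.Bijective v → Function.Bijective w →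
      hamMultisign σ v = hamMultisign σ w)
    (l m' p q : Fin n)
    (hlm : l ≠ m') (hlp : l ≠ p) (hlq : l ≠ q)
    (hmp : m' ≠ p) (hmq : m' ≠ q) (hpq : p ≠ q) :
    triMultisign σ l m' q = triMultisign σ l p q :=
  triangles_sharing_edge_same_multisign_general n m σ hsym hham l m' p q hlm hlp hlq hmp hmq hpq
end

section
/- Let Σ be a multisigned complete graph on n ≥ 5 vertices. If all Hamiltonian cycles of Σ have the same multisign, then all triangles of Σ have the same multisign. -/
/-- Any four distinct values can be taken as the first four values of a
permutation of `Fin n`. -/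
theorem exists_perm_four (n : ℕ) (hn : 5 ≤ n) (b c d a : Fin n)
    (h1 : b ≠ c) (h2 : b ≠ d) (h3 : b ≠ a) (h4 : c ≠ d) (h5 : c ≠ a) (h6 : d ≠ a) :
    ∃ e : Equiv.Perm (Fin n), e ⟨0, by omega⟩ = b ∧ e ⟨1, by omega⟩ = c ∧
      e ⟨2, by omega⟩ = d ∧ e ⟨3, by omega⟩ = a := by
  classical
  have h0n : 0 < n := by omega
  have h1n : 1 < n := by omega
  have h2n : 2 < n := by omega
  have h3n : 3 < n := by omega
  set i0 : Fin n := ⟨0, h0n⟩ with hdi0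
  set i1 : Fin n := ⟨1, h1n⟩ with hdi1
  set i2 : Fin n := ⟨2, h2n⟩ with hdi2
  set i3 : Fin n := ⟨3, h3n⟩ with hdi3
  have hi01 : i0 ≠ i1 := by simp [hdi0, hdi1, Fin.ext_iff]
  have hi02 : i0 ≠ i2 := by simp [hdi0, hdi2, Fin.ext_iff]
  have hi03 : i0 ≠ i3 := by simp [hdi0, hdi3, Fin.ext_iff]
  have hi12 : i1 ≠ i2 := by simp [hdi1, hdi2, Fin.ext_iff]
  have hi13 : i1 ≠ i3 := by simp [hdi1, hdi3, Fin.ext_iff]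
  have hi23 : i2 ≠ i3 := by simp [hdi2, hdi3, Fin.ext_iff]
  set f : Fin n → Fin n := fun x =>
    if x = i0 then b else if x = i1 then c else if x = i2 then d else if x = i3 then a else x
    with hf
  have e0 : f i0 = b := by rw [hf]; simp
  have e1 : f i1 = c := by rw [hf]; simp [hi01.symm, if_neg]
  have e2 : f i2 = d := by rw [hf]; simp [hi02.symm, hi12.symm]
  have e3 : f i3 = a := by rw [hf]; simp [hi03.symm, hi13.symm, hi23.symm]
  have hinj : Set.InjOn f ({i0, i1, i2, i3} : Finset (Fin n)) := by
    intro x hx y hy hxy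
    simp only [Finset.coe_insert, Set.mem_insert_iff, Finset.coe_singleton,
      Set.mem_singleton_iff] at hx hy
    rcases hx with rfl|rfl|rfl|rfl <;> rcases hy with rfl|rfl|rfl|rfl <;>
      simp only [e0, e1, e2, e3] at hxy <;> simp_all
  obtain ⟨g, hg⟩ := Finset.exists_equiv_extend_of_card_eq
    (t := (Finset.univ : Finset (Fin n))) (by simp) (s := {i0, i1, i2, i3})
    (f := f) (by intro x _; simp) hinj
  refine ⟨g.trans (Equiv.subtypeUnivEquiv (by simp)), ?_, ?_, ?_, ?_⟩
  · show ((g i0 : Fin n)) = b; rw [hg _ (by simp), e0]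
  · show ((g i1 : Fin n)) = c; rw [hg _ (by simp), e1]
  · show ((g i2 : Fin n)) = d; rw [hg _ (by simp), e2]
  · show ((g i3 : Fin n)) = a; rw [hg _ (by simp), e3]

/-- The key step: triangles sharing an edge have equal multisign. -/
theorem key_step (n m : ℕ) (hn : 5 ≤ n) [NeZero n]
    (σ : Fin n → Fin n → (Fin m → ℤˣ))
    (hsym : ∀ a b, σ a b = σ b a)
    (hham : ∀ v w : Fin n → Fin n, Function.Bijective v → Function.Bijective w →
      hamMultisign σ v = hamMultisign σ w)
    (a b c d : Fin n) (hab : a ≠ b) (hac : a ≠ c) (had : a ≠ d)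
    (hbc : b ≠ c) (hbd : b ≠ d) (hcd : c ≠ d) :
    triMultisign σ a b c = triMultisign σ a b d := by
  classical
  have h0n : 0 < n := by omega
  have h1n : 1 < n := by omega
  have h2n : 2 < n := by omega
  have h3n : 3 < n := by omega
  have s01 : (⟨0, h0n⟩ : Fin n) + 1 = ⟨1, h1n⟩ := by
    apply Fin.ext; simp [Fin.add_def, Fin.val_one']; exact Nat.mod_eq_of_lt h1n
  have s12 : (⟨1, h1n⟩ : Fin n) + 1 = ⟨2, h2n⟩ := by
    apply Fin.ext; simp [Fin.add_def, Fin.val_one']; exact Nat.mod_eq_of_lt h2n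
  have s23 : (⟨2, h2n⟩ : Fin n) + 1 = ⟨3, h3n⟩ := by
    apply Fin.ext; simp [Fin.add_def, Fin.val_one']; exact Nat.mod_eq_of_lt h3n
  have hi01 : (⟨0, h0n⟩ : Fin n) ≠ ⟨1, h1n⟩ := by simp [Fin.ext_iff]
  have hi02 : (⟨0, h0n⟩ : Fin n) ≠ ⟨2, h2n⟩ := by simp [Fin.ext_iff]
  have hi12 : (⟨1, h1n⟩ : Fin n) ≠ ⟨2, h2n⟩ := by simp [Fin.ext_iff]
  have hi31 : (⟨3, h3n⟩ : Fin n) ≠ ⟨1, h1n⟩ := by simp [Fin.ext_iff]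
  have hi32 : (⟨3, h3n⟩ : Fin n) ≠ ⟨2, h2n⟩ := by simp [Fin.ext_iff]
  set i0 : Fin n := ⟨0, h0n⟩ with hdi0
  set i1 : Fin n := ⟨1, h1n⟩ with hdi1
  set i2 : Fin n := ⟨2, h2n⟩ with hdi2
  set i3 : Fin n := ⟨3, h3n⟩ with hdi3
  obtain ⟨e, he0', he1', he2', he3'⟩ := exists_perm_four n hn b c d a hbc hbd
    (fun h => hab h.symm) hcd (fun h => hac h.symm) (fun h => had h.symm)
  have he0 : e i0 = b := he0'
  have he1 : e i1 = c := he1'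
  have he2 : e i2 = d := he2'
  have he3 : e i3 = a := he3'
  set e' : Equiv.Perm (Fin n) := (Equiv.swap i1 i2).trans e with hde'
  set F : Fin n → (Fin m → ℤˣ) := fun k => σ (e k) (e (k + 1)) with hdF
  set G : Fin n → (Fin m → ℤˣ) := fun k => σ (e' k) (e' (k + 1)) with hdG
  have h : ∏ k : Fin n, F k = ∏ k : Fin n, G k :=
    hham e e' e.bijective e'.bijective
  set s : Finset (Fin n) := {i0, i1, i2} with hds
  have hFG : ∀ k ∈ sᶜ, F k = G k := by
    intro k hk
    simp only [hds, Finset.mem_compl, Finset.mem_insert, Finset.mem_singleton,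
      not_or] at hk
    obtain ⟨hk0, hk1, hk2⟩ := hk
    have h1 : e' k = e k := by
      rw [hde']; simp [Equiv.swap_apply_of_ne_of_ne hk1 hk2]
    have hk11 : k + 1 ≠ i1 := by
      intro hh; exact hk0 (by rwa [← s01, add_left_inj] at hh)
    have hk12 : k + 1 ≠ i2 := by
      intro hh; exact hk1 (by rwa [← s12, add_left_inj] at hh)
    have h2 : e' (k + 1) = e (k + 1) := by
      rw [hde']; simp [Equiv.swap_apply_of_ne_of_ne hk11 hk12]
    rw [hdF, hdG]; simp only [h1, h2]
  have hs : ∏ k ∈ s, F k = ∏ k ∈ s, G k := by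
    have hC : ∏ k ∈ sᶜ, F k = ∏ k ∈ sᶜ, G k := Finset.prod_congr rfl hFG
    have h2 := (Finset.prod_mul_prod_compl s F).trans
      (h.trans (Finset.prod_mul_prod_compl s G).symm)
    rw [hC] at h2
    exact mul_right_cancel h2
  have hmem1 : i0 ∉ ({i1, i2} : Finset (Fin n)) := by simp [hi01, hi02]
  have hmem2 : i1 ∉ ({i2} : Finset (Fin n)) := by simp [hi12]
  rw [hds, Finset.prod_insert hmem1, Finset.prod_insert hmem2,
    Finset.prod_singleton, Finset.prod_insert hmem1, Finset.prod_insert hmem2,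
    Finset.prod_singleton] at hs
  have he'0 : e' i0 = b := by
    rw [hde']; simp [Equiv.swap_apply_of_ne_of_ne hi01 hi02, he0]
  have he'1 : e' i1 = d := by rw [hde']; simp [he2]
  have he'2 : e' i2 = c := by rw [hde']; simp [he1]
  have he'3 : e' i3 = a := by
    rw [hde']; simp [Equiv.swap_apply_of_ne_of_ne hi31 hi32, he3]
  rw [hdF, hdG] at hs
  simp only [s01, s12, s23, he0, he1, he2, he3, he'0, he'1, he'2, he'3] at hs
  -- hs : σ b c * (σ c d * σ d a) = σ b d * (σ d c * σ c a)
  rw [hsym d c, mul_left_comm (σ b c), mul_left_comm (σ b d)] at hs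
  have key2 : σ b c * σ d a = σ b d * σ c a := mul_left_cancel hs
  have hsq : ∀ x : Fin m → ℤˣ, x * x = 1 := fun x =>
    funext fun i => Int.units_mul_self (x i)
  show σ a b * σ b c * σ c a = σ a b * σ b d * σ d a
  have step1 : σ a b * ((σ b c * σ d a) * σ d a) * σ c a
      = σ a b * σ b c * σ c a := by
    rw [mul_assoc (σ b c), hsq, mul_one]
  have step2 : σ a b * ((σ b d * σ c a) * σ d a) * σ c a
      = σ a b * σ b d * σ d a * (σ c a * σ c a) := by ac_rfl
  rw [← step1, key2, step2, hsq, mul_one]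

/-- Triangle multisign is invariant under swapping the last two vertices. -/
theorem tri_swap23 {n m : ℕ} (σ : Fin n → Fin n → (Fin m → ℤˣ))
    (hsym : ∀ a b, σ a b = σ b a) (x y z : Fin n) :
    triMultisign σ x y z = triMultisign σ x z y := by
  unfold triMultisign
  rw [hsym x z, hsym z y, hsym y x]
  ac_rfl

/-- Triangle multisign is invariant under cyclic shifts. -/
theorem tri_cyc {n m : ℕ} (σ : Fin n → Fin n → (Fin m → ℤˣ))
    (x y z : Fin n) :
    triMultisign σ x y z = triMultisign σ y z x := by
  unfold triMultisign
  ac_rfl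

/-- If all Hamiltonian cycles have the same multisign, then all triangles
have the same multisign. -/
theorem all_triangles_same_multisign (n m : ℕ) (hn : 5 ≤ n) [NeZero n]
    (σ : Fin n → Fin n → (Fin m → ℤˣ))
    (hsym : ∀ a b, σ a b = σ b a)
    (hham : ∀ v w : Fin n → Fin n, Function.Bijective v → Function.Bijective w →
      hamMultisign σ v = hamMultisign σ w) :
    ∀ a b c a' b' c' : Fin n,
      a ≠ b → b ≠ c → a ≠ c → a' ≠ b' → b' ≠ c' → a' ≠ c' →
        triMultisign σ a b c = triMultisign σ a' b' c' := by
  classical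
  -- replace last vertex (allowing equality)
  have step1 : ∀ a b c d : Fin n, a ≠ b → a ≠ c → b ≠ c → a ≠ d → b ≠ d →
      triMultisign σ a b c = triMultisign σ a b d := by
    intro a b c d hab hac hbc had hbd
    by_cases h : c = d
    · rw [h]
    · exact key_step n m hn σ hsym hham a b c d hab hac had hbc hbd h
  -- replace last two vertices
  have step2 : ∀ a b c b' c' : Fin n, a ≠ b → b ≠ c → a ≠ c →
      a ≠ b' → b' ≠ c' → a ≠ c' →
      triMultisign σ a b c = triMultisign σ a b' c' := by
    intro a b c b' c' hab hbc hac hab' hbc' hac'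
    by_cases h : b' = c
    · subst h
      rw [tri_swap23 σ hsym a b b']
      exact step1 a b' b c' hab' hab (fun hh => hbc hh.symm) hac' hbc'
    · calc triMultisign σ a b c = triMultisign σ a c b := tri_swap23 σ hsym a b c
        _ = triMultisign σ a c b' := step1 a c b b' hac hab (fun hh => hbc hh.symm)
              hab' (fun hh => h hh.symm)
        _ = triMultisign σ a b' c := tri_swap23 σ hsym a c b'
        _ = triMultisign σ a b' c' := step1 a b' c c' hab' hac h hac' hbc'
  intro a b c a' b' c' hab hbc hac hab' hbc' hac'
  by_cases h1 : a' = a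
  · subst h1; exact step2 a' b c b' c' hab hbc hac hab' hbc' hac'
  by_cases h2 : a' = b
  · subst h2
    rw [tri_cyc σ a a' c]
    exact step2 a' c a b' c' hbc (fun hh => hac hh.symm) h1
      hab' hbc' hac'
  by_cases h3 : a' = c
  · subst h3
    rw [tri_cyc σ a b a', tri_cyc σ b a' a]
    exact step2 a' a b b' c' (fun hh => h1 hh) hab (fun hh => h2 hh) hab' hbc' hac'
  · calc triMultisign σ a b c = triMultisign σ b c a := tri_cyc σ a b c
      _ = triMultisign σ b c a' := step1 b c a a' hbc (fun hh => hab hh.symm)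
            (fun hh => hac hh.symm) (fun hh => h2 hh.symm) (fun hh => h3 hh.symm)
      _ = triMultisign σ c a' b := tri_cyc σ b c a'
      _ = triMultisign σ a' b c := tri_cyc σ c a' b
      _ = triMultisign σ a' b' c' := step2 a' b c b' c' (fun hh => h2 hh) hbc
            (fun hh => h3 hh) hab' hbc' hac'
end

section
/- Let Σ be a multisigned complete graph on n ≥ 5 vertices and let g be a fixed non-identity element of G. Then every Hamiltonian cycle of Σ has multisign g if and only if every triangle of Σ has multisign g and n is odd. -/
open Finset Fin.NatCast

section

variable {n m : ℕ}

theorem multisign_mul_self (x : Fin m → ℤˣ) : x * x = 1 :=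
  funext fun i => Int.units_mul_self (x i)

theorem multisign_pow_eq_pow_mod_two (x : Fin m → ℤˣ) (k : ℕ) : x ^ k = x ^ (k % 2) :=
  funext fun i => Int.units_pow_eq_pow_mod_two (x i) k

variable {σ : Fin n → Fin n → Fin m → ℤˣ}

theorem triMultisign_swap_right (hsym : ∀ a b, σ a b = σ b a) (a b c : Fin n) :
    triMultisign σ a b c = triMultisign σ a c b := by
  simp only [triMultisign, hsym a b, hsym b c, hsym c a]
  ac_rfl

theorem prod_range_eq_mul_prod_triMultisign (hsym : ∀ a b, σ a b = σ b a) (w : ℕ → Fin n)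
    (j : ℕ) :
    ∏ k ∈ range (j + 1), σ (w k) (w (k + 1)) =
      σ (w 0) (w (j + 1)) * ∏ k ∈ Ico 1 (j + 1), triMultisign σ (w 0) (w k) (w (k + 1)) := by
  induction j with
  | zero => simp
  | succ j ih =>
    rw [prod_range_succ, ih, prod_Ico_succ_top (by omega : 1 ≤ j + 1), triMultisign,
      hsym (w (j + 1 + 1)) (w 0)]
    calc _ = σ (w 0) (w (j + 1 + 1)) * σ (w 0) (w (j + 1 + 1)) *
          (σ (w 0) (w (j + 1)) * (∏ k ∈ Ico 1 (j + 1), triMultisign σ (w 0) (w k) (w (k + 1))) *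
            σ (w (j + 1)) (w (j + 1 + 1))) := by rw [multisign_mul_self, one_mul]
      _ = _ := by ac_rfl

variable [NeZero n]

theorem hamMultisign_eq_prod_triMultisign (hn : 2 ≤ n) (hsym : ∀ a b, σ a b = σ b a)
    (v : Fin n → Fin n) :
    hamMultisign σ v = ∏ k ∈ Ico 1 (n - 1), triMultisign σ (v 0) (v k) (v (k + 1)) := by
  set w : ℕ → Fin n := fun k => v k
  have hw : ∀ k : ℕ, v (k + 1) = w (k + 1) := fun k => by simp only [w, Nat.cast_succ]
  have hwn : w (n - 2 + 1 + 1) = w 0 := by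
    simp only [w, show n - 2 + 1 + 1 = n by omega, Fin.natCast_self, Nat.cast_zero]
  calc hamMultisign σ v = ∏ k ∈ range (n - 2 + 1 + 1), σ (w k) (w (k + 1)) := by
        rw [show n - 2 + 1 + 1 = n by omega, ← Fin.prod_univ_eq_prod_range]
        simp only [hamMultisign, w, ← hw, Fin.cast_val_eq_self]
    -- the closing edge `w (n - 1) w 0` cancels the chord `w 0 w (n - 1)` left over by the fan
    _ = ∏ k ∈ Ico 1 (n - 1), triMultisign σ (w 0) (w k) (w (k + 1)) := by
        rw [prod_range_succ, prod_range_eq_mul_prod_triMultisign hsym, hwn,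
          hsym (w (n - 2 + 1)) (w 0), mul_right_comm, multisign_mul_self, one_mul,
          show n - 2 + 1 = n - 1 by omega]
    _ = _ := by simp only [w, hw, Nat.cast_zero]

theorem hamMultisign_eq_pow_of_triMultisign_eq (hn : 2 ≤ n) (hsym : ∀ a b, σ a b = σ b a)
    {v : Fin n → Fin n} (hv : Function.Injective v) {h : Fin m → ℤˣ}
    (hT : ∀ x y, v 0 ≠ x → x ≠ y → v 0 ≠ y → triMultisign σ (v 0) x y = h) :
    hamMultisign σ v = h ^ (n - 2) := by
  have hpos : ∀ {i j : ℕ}, i < n → j < n → i ≠ j → v i ≠ v j := fun hi hj hij =>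
    hv.ne ((CharP.natCast_injOn_Iio (Fin n) n).ne hi hj hij)
  rw [hamMultisign_eq_prod_triMultisign hn hsym, prod_congr rfl fun k hk => hT _ _ ?_ ?_ ?_,
    prod_const, Nat.card_Ico, Nat.sub_sub]
  all_goals
    rw [mem_Ico] at hk
    simp only [← Nat.cast_zero (R := Fin n), ← Nat.cast_succ]
    exact hpos (by omega) (by omega) (by omega)

theorem triMultisign_eq_of_hamMultisign_eq_swap (hn : 4 ≤ n) (hsym : ∀ a b, σ a b = σ b a)
    (v : Fin n → Fin n)
    (hvs : hamMultisign σ v = hamMultisign σ (v ∘ Equiv.swap (1 : Fin n) 2)) :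
    triMultisign σ (v 0) (v 2) (v 3) = triMultisign σ (v 0) (v 1) (v 3) := by
  set s := Equiv.swap (1 : Fin n) 2
  have hs : ∀ k : ℕ, k < n → k ≠ 1 → k ≠ 2 → s k = k := fun k hk h1 h2 =>
    Equiv.swap_apply_of_ne_of_ne
      (by simpa using (CharP.natCast_injOn_Iio (Fin n) n).ne hk (show _ < n by omega) h1)
      (by simpa using (CharP.natCast_injOn_Iio (Fin n) n).ne hk (show _ < n by omega) h2)
  have hsplit : ∀ w : Fin n → Fin n, hamMultisign σ w =
      triMultisign σ (w 0) (w 1) (w 2) * triMultisign σ (w 0) (w 2) (w 3) *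
        ∏ k ∈ Ico 3 (n - 1), triMultisign σ (w 0) (w k) (w (k + 1)) := fun w => by
    rw [hamMultisign_eq_prod_triMultisign (by omega) hsym,
      prod_eq_prod_Ico_succ_bot (by omega), prod_eq_prod_Ico_succ_bot (by omega), mul_assoc]
    norm_num [one_add_one_eq_two, two_add_one_eq_three]
  have htail : ∏ k ∈ Ico 3 (n - 1), triMultisign σ ((v ∘ s) 0) ((v ∘ s) k) ((v ∘ s) (k + 1)) =
      ∏ k ∈ Ico 3 (n - 1), triMultisign σ (v 0) (v k) (v (k + 1)) := prod_congr rfl fun k hk => by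
    rw [mem_Ico] at hk
    simp only [Function.comp_apply, ← Nat.cast_zero (R := Fin n), ← Nat.cast_succ,
      hs 0 (by omega) (by omega) (by omega), hs k (by omega) (by omega) (by omega),
      hs (k + 1) (by omega) (by omega) (by omega)]
  have hs0 : s 0 = 0 := by simpa using hs 0 (by omega) (by omega) (by omega)
  have hs3 : s 3 = 3 := by simpa using hs 3 (by omega) (by omega) (by omega)
  have hs1 : s 1 = 2 := Equiv.swap_apply_left _ _
  have hs2 : s 2 = 1 := Equiv.swap_apply_right _ _
  rw [hsplit, hsplit, htail] at hvs
  simp only [Function.comp_apply, hs0, hs1, hs2, hs3,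
    ← triMultisign_swap_right hsym (v 0) (v 1) (v 2)] at hvs
  exact mul_left_cancel (mul_right_cancel hvs)

theorem triMultisign_middle_eq_of_forall_hamMultisign_eq (hn : 4 ≤ n)
    (hsym : ∀ a b, σ a b = σ b a) {g : Fin m → ℤˣ}
    (hall : ∀ v : Fin n → Fin n, Function.Bijective v → hamMultisign σ v = g)
    {a b c d : Fin n} (hab : a ≠ b) (hac : a ≠ c) (had : a ≠ d) (hbd : b ≠ d) (hcd : c ≠ d) :
    triMultisign σ a b d = triMultisign σ a c d := by
  obtain rfl | hbc := eq_or_ne b c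
  · rfl
  obtain ⟨v, hv⟩ := Equiv.Perm.exists_extending_pair (fun i : Fin 4 => ((i : ℕ) : Fin n))
    ![a, c, b, d]
    (fun i j hij => Fin.ext <|
      CharP.natCast_injOn_Iio (Fin n) n (show _ < n by omega) (show _ < n by omega) hij)
    (by intro i j hij; fin_cases i <;> fin_cases j <;> simp_all [eq_comm])
  have h0 : v 0 = a := by simpa using hv 0
  have h1 : v 1 = c := by simpa using hv 1
  have h2 : v 2 = b := by simpa using hv 2
  have h3 : v 3 = d := by simpa using hv 3
  have := triMultisign_eq_of_hamMultisign_eq_swap hn hsym v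
    ((hall v v.bijective).trans (hall _ (v.bijective.comp (Equiv.swap _ _).bijective)).symm)
  rwa [h0, h1, h2, h3] at this

theorem triMultisign_eq_of_forall_hamMultisign_eq (hn : 4 ≤ n)
    (hsym : ∀ a b, σ a b = σ b a) {g : Fin m → ℤˣ}
    (hall : ∀ v : Fin n → Fin n, Function.Bijective v → hamMultisign σ v = g)
    {a b c x y : Fin n} (hab : a ≠ b) (hbc : b ≠ c) (hac : a ≠ c)
    (hax : a ≠ x) (hxy : x ≠ y) (hay : a ≠ y) :
    triMultisign σ a b c = triMultisign σ a x y := by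
  have hmid := @triMultisign_middle_eq_of_forall_hamMultisign_eq _ _ σ _ hn hsym g hall
  obtain rfl | hxc := eq_or_ne x c
  · rw [hmid hab hay hac hbc hxy.symm, triMultisign_swap_right hsym]
  calc triMultisign σ a b c
      = triMultisign σ a c x := by rw [hmid hab hax hac hbc hxc, triMultisign_swap_right hsym]
    _ = triMultisign σ a x y := by
        rw [hmid hac hay hax hxc.symm hxy.symm, triMultisign_swap_right hsym]

theorem eq_triMultisign_pow_of_forall_hamMultisign_eq (hn : 4 ≤ n)
    (hsym : ∀ a b, σ a b = σ b a) {g : Fin m → ℤˣ}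
    (hall : ∀ v : Fin n → Fin n, Function.Bijective v → hamMultisign σ v = g)
    {a b c : Fin n} (hab : a ≠ b) (hbc : b ≠ c) (hac : a ≠ c) :
    g = triMultisign σ a b c ^ (n - 2) := by
  obtain ⟨v, rfl⟩ : ∃ v : Equiv.Perm (Fin n), v 0 = a := ⟨Equiv.swap 0 a, Equiv.swap_apply_left _ _⟩
  rw [← hall v v.bijective]
  exact hamMultisign_eq_pow_of_triMultisign_eq (by omega) hsym v.injective fun x y hax hxy hay =>
    (triMultisign_eq_of_forall_hamMultisign_eq hn hsym hall hab hbc hac hax hxy hay).symm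

end

/-- All Hamiltonian cycles have multisign `g ≠ e` iff all triangles have
multisign `g` and `n` is odd. -/
theorem all_ham_multisign_g_iff (n m : ℕ) (hn : 5 ≤ n) [NeZero n]
    (σ : Fin n → Fin n → (Fin m → ℤˣ))
    (hsym : ∀ a b, σ a b = σ b a)
    (g : Fin m → ℤˣ) (hg : g ≠ 1) :
    (∀ v : Fin n → Fin n, Function.Bijective v → hamMultisign σ v = g) ↔
      ((∀ a b c : Fin n, a ≠ b → b ≠ c → a ≠ c → triMultisign σ a b c = g) ∧
        Odd n) := by
  constructor
  · intro hall
    have hpow := @eq_triMultisign_pow_of_forall_hamMultisign_eq _ _ σ _ (by omega) hsym g hall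
    have hodd : Odd n := by
      obtain ⟨a, b, c, hab, hac, hbc⟩ :=
        (Fintype.two_lt_card_iff (α := Fin n)).mp (by rw [Fintype.card_fin]; omega)
      by_contra heven
      apply hg
      rw [hpow hab hbc hac, multisign_pow_eq_pow_mod_two, show (n - 2) % 2 = 0 by grind, pow_zero]
    refine ⟨fun a b c hab hbc hac => ?_, hodd⟩
    rw [hpow hab hbc hac, multisign_pow_eq_pow_mod_two, show (n - 2) % 2 = 1 by grind, pow_one]
  · rintro ⟨hT, hodd⟩ v hv
    rw [hamMultisign_eq_pow_of_triMultisign_eq (by omega) hsym hv.injective fun x y => hT _ x y,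
      multisign_pow_eq_pow_mod_two, show (n - 2) % 2 = 1 by grind, pow_one]
end

section
/- Let Σ be a multisigned complete graph on n ≥ 5 vertices. Then every Hamiltonian cycle of Σ has multisign equal to the identity e if and only if either all triangles of Σ have the same non-identity multisign and n is even, or all triangles of Σ have multisign e. -/
namespace MsgHelp

lemma msq {m : ℕ} (x : Fin m → ℤˣ) : x * x = 1 := funext fun _ => Int.units_mul_self _

lemma msq' {m : ℕ} (x y : Fin m → ℤˣ) : x * (x * y) = y := by rw [← mul_assoc, msq, one_mul]

lemma pow_even {m : ℕ} (x : Fin m → ℤˣ) {k : ℕ} (hk : Even k) : x ^ k = 1 := by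
  obtain ⟨r, rfl⟩ := hk
  rw [← two_mul, pow_mul, pow_two, msq, one_pow]

lemma pow_odd {m : ℕ} (x : Fin m → ℤˣ) {k : ℕ} (hk : ¬ Even k) : x ^ k = x := by
  obtain ⟨r, rfl⟩ := Nat.not_even_iff_odd.mp hk
  rw [pow_succ, pow_even x ⟨r, (two_mul r).symm ▸ rfl⟩, one_mul]

variable {n m : ℕ} [NeZero n]

lemma vv1 (hn : 5 ≤ n) : ((1:Fin n)).val = 1 := by
  rw [Fin.val_one']; exact Nat.mod_eq_of_lt (by omega)

lemma vv2 (hn : 5 ≤ n) : ((2:Fin n)).val = 2 := by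
  rw [show ((2:Fin n)).val = 2 % n from rfl]; exact Nat.mod_eq_of_lt (by omega)

lemma vv3 (hn : 5 ≤ n) : ((3:Fin n)).val = 3 := by
  rw [show ((3:Fin n)).val = 3 % n from rfl]; exact Nat.mod_eq_of_lt (by omega)

lemma ne01 (hn : 5 ≤ n) : (0:Fin n) ≠ 1 := by
  intro h; rw [Fin.ext_iff, Fin.val_zero, vv1 hn] at h; omega
lemma ne02 (hn : 5 ≤ n) : (0:Fin n) ≠ 2 := by
  intro h; rw [Fin.ext_iff, Fin.val_zero, vv2 hn] at h; omega
lemma ne03 (hn : 5 ≤ n) : (0:Fin n) ≠ 3 := by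
  intro h; rw [Fin.ext_iff, Fin.val_zero, vv3 hn] at h; omega
lemma ne12 (hn : 5 ≤ n) : (1:Fin n) ≠ 2 := by
  intro h; rw [Fin.ext_iff, vv1 hn, vv2 hn] at h; omega
lemma ne13 (hn : 5 ≤ n) : (1:Fin n) ≠ 3 := by
  intro h; rw [Fin.ext_iff, vv1 hn, vv3 hn] at h; omega
lemma ne23 (hn : 5 ≤ n) : (2:Fin n) ≠ 3 := by
  intro h; rw [Fin.ext_iff, vv2 hn, vv3 hn] at h; omega

lemma neg1ne0 (hn : 5 ≤ n) : (-1:Fin n) ≠ 0 := by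
  intro h
  have h2 : (1:Fin n) = 0 := by rw [← neg_add_cancel (1:Fin n), h, zero_add]
  rw [Fin.ext_iff, vv1 hn, Fin.val_zero] at h2; omega

lemma succ_ne (hn : 5 ≤ n) (k : Fin n) : k ≠ k + 1 := by
  intro hk
  have h1 : k + 0 = k + 1 := by rw [add_zero]; exact hk
  have h2 : (0:Fin n) = 1 := add_left_cancel h1
  rw [Fin.ext_iff, vv1 hn, Fin.val_zero] at h2; omega

lemma add_one_ne_zero {k : Fin n} (h : k ≠ -1) : k + 1 ≠ 0 :=
  fun hk => h (eq_neg_of_add_eq_zero_left hk)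

lemma one_add_one (hn : 5 ≤ n) : (1:Fin n) + 1 = 2 := by
  rw [Fin.ext_iff, Fin.add_def, vv1 hn, vv2 hn]
  exact Nat.mod_eq_of_lt (by omega)

lemma two_add_one (hn : 5 ≤ n) : (2:Fin n) + 1 = 3 := by
  rw [Fin.ext_iff, Fin.add_def, vv1 hn, vv2 hn, vv3 hn]
  exact Nat.mod_eq_of_lt (by omega)

lemma zero_not_mem_neg1 (hn : 5 ≤ n) : (0:Fin n) ∉ ({-1} : Finset (Fin n)) := by
  simpa using (neg1ne0 hn).symm

lemma card_sd (hn : 5 ≤ n) : (Finset.univ \ ({0, -1} : Finset (Fin n))).card = n - 2 := by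
  rw [Finset.card_sdiff_of_subset (Finset.subset_univ _), Finset.card_univ, Fintype.card_fin,
    Finset.card_insert_of_notMem (zero_not_mem_neg1 hn), Finset.card_singleton]

lemma triRot (σ : Fin n → Fin n → (Fin m → ℤˣ)) (a b c : Fin n) :
    triMultisign σ a b c = triMultisign σ b c a := by
  unfold triMultisign
  simp [mul_comm, mul_left_comm, mul_assoc]

lemma triSwap (σ : Fin n → Fin n → (Fin m → ℤˣ)) (hsym : ∀ a b, σ a b = σ b a)
    (a b c : Fin n) : triMultisign σ a b c = triMultisign σ a c b := by
  unfold triMultisign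
  rw [hsym a c, hsym c b, hsym b a]
  simp [mul_comm, mul_left_comm, mul_assoc]

lemma ham_eq_prod (hn : 5 ≤ n) (σ : Fin n → Fin n → (Fin m → ℤˣ))
    (hsym : ∀ a b, σ a b = σ b a) (v : Fin n → Fin n) :
    hamMultisign σ v
      = ∏ k ∈ Finset.univ \ ({0, -1} : Finset (Fin n)),
          triMultisign σ (v 0) (v k) (v (k+1)) := by
  have hT : ∀ k : Fin n, triMultisign σ (v 0) (v k) (v (k+1))
      = σ (v 0) (v k) * σ (v k) (v (k+1)) * σ (v 0) (v (k+1)) := by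
    intro k; unfold triMultisign; rw [hsym (v (k+1)) (v 0)]
  have full : ∏ k : Fin n, triMultisign σ (v 0) (v k) (v (k+1)) = hamMultisign σ v := by
    unfold hamMultisign
    calc ∏ k : Fin n, triMultisign σ (v 0) (v k) (v (k+1))
        = ∏ k : Fin n, (σ (v 0) (v k) * σ (v k) (v (k+1)) * σ (v 0) (v (k+1))) :=
          Finset.prod_congr rfl fun k _ => hT k
      _ = ((∏ k : Fin n, σ (v 0) (v k)) * ∏ k : Fin n, σ (v k) (v (k+1)))
            * ∏ k : Fin n, σ (v 0) (v (k+1)) := by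
          rw [Finset.prod_mul_distrib, Finset.prod_mul_distrib]
      _ = ((∏ k : Fin n, σ (v 0) (v k)) * ∏ k : Fin n, σ (v k) (v (k+1)))
            * ∏ k : Fin n, σ (v 0) (v k) := by
          rw [Fintype.prod_equiv (Equiv.addRight (1:Fin n))
            (fun k => σ (v 0) (v (k+1))) (fun k => σ (v 0) (v k)) (fun k => rfl)]
      _ = ∏ k : Fin n, σ (v k) (v (k+1)) := by
          rw [mul_right_comm, mul_comm (∏ k : Fin n, σ (v 0) (v k)), mul_assoc, msq']
  rw [← full, ← Finset.prod_sdiff (Finset.subset_univ ({0, -1} : Finset (Fin n)))]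
  have hpair : ∏ k ∈ ({0, -1} : Finset (Fin n)),
      triMultisign σ (v 0) (v k) (v (k+1)) = 1 := by
    rw [Finset.prod_insert (zero_not_mem_neg1 hn), Finset.prod_singleton,
      hT 0, hT (-1), neg_add_cancel, zero_add]
    rw [hsym (v (-1)) (v 0)]
    simp [mul_comm, mul_left_comm, mul_assoc, msq, msq']
  rw [hpair, mul_one]

lemma exists_perm4 (hn : 5 ≤ n) (a b c d : Fin n)
    (hab : a ≠ b) (hac : a ≠ c) (had : a ≠ d) (hbc : b ≠ c) (hbd : b ≠ d) (hcd : c ≠ d) :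
    ∃ v : Equiv.Perm (Fin n), v 0 = a ∧ v 1 = b ∧ v 2 = c ∧ v 3 = d := by
  classical
  set p1 : Equiv.Perm (Fin n) := Equiv.swap 0 a with hp1
  have h10 : p1 0 = a := Equiv.swap_apply_left 0 a
  set b' : Fin n := p1.symm b with hb'
  have hb'b : p1 b' = b := p1.apply_symm_apply b
  have hb'0 : b' ≠ 0 := by
    intro h; rw [h, h10] at hb'b; exact hab hb'b
  set p2 : Equiv.Perm (Fin n) := Equiv.swap 1 b' with hp2
  set q2 : Equiv.Perm (Fin n) := p2.trans p1 with hq2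
  have hq2_0 : q2 0 = a := by
    show p1 (p2 0) = a
    rw [hp2, Equiv.swap_apply_of_ne_of_ne (ne01 hn) (Ne.symm hb'0), h10]
  have hq2_1 : q2 1 = b := by
    show p1 (p2 1) = b
    rw [hp2, Equiv.swap_apply_left, hb'b]
  set c' : Fin n := q2.symm c with hc'
  have hc'c : q2 c' = c := q2.apply_symm_apply c
  have hc'0 : c' ≠ 0 := by intro h; rw [h, hq2_0] at hc'c; exact hac hc'c
  have hc'1 : c' ≠ 1 := by intro h; rw [h, hq2_1] at hc'c; exact hbc hc'c
  set p3 : Equiv.Perm (Fin n) := Equiv.swap 2 c' with hp3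
  set q3 : Equiv.Perm (Fin n) := p3.trans q2 with hq3
  have hq3_0 : q3 0 = a := by
    show q2 (p3 0) = a
    rw [hp3, Equiv.swap_apply_of_ne_of_ne (ne02 hn) (Ne.symm hc'0), hq2_0]
  have hq3_1 : q3 1 = b := by
    show q2 (p3 1) = b
    rw [hp3, Equiv.swap_apply_of_ne_of_ne (ne12 hn) (Ne.symm hc'1), hq2_1]
  have hq3_2 : q3 2 = c := by
    show q2 (p3 2) = c
    rw [hp3, Equiv.swap_apply_left, hc'c]
  set d' : Fin n := q3.symm d with hd'
  have hd'd : q3 d' = d := q3.apply_symm_apply d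
  have hd'0 : d' ≠ 0 := by intro h; rw [h, hq3_0] at hd'd; exact had hd'd
  have hd'1 : d' ≠ 1 := by intro h; rw [h, hq3_1] at hd'd; exact hbd hd'd
  have hd'2 : d' ≠ 2 := by intro h; rw [h, hq3_2] at hd'd; exact hcd hd'd
  set p4 : Equiv.Perm (Fin n) := Equiv.swap 3 d' with hp4
  refine ⟨p4.trans q3, ?_, ?_, ?_, ?_⟩
  · show q3 (p4 0) = a
    rw [hp4, Equiv.swap_apply_of_ne_of_ne (ne03 hn) (Ne.symm hd'0), hq3_0]
  · show q3 (p4 1) = b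
    rw [hp4, Equiv.swap_apply_of_ne_of_ne (ne13 hn) (Ne.symm hd'1), hq3_1]
  · show q3 (p4 2) = c
    rw [hp4, Equiv.swap_apply_of_ne_of_ne (ne23 hn) (Ne.symm hd'2), hq3_2]
  · show q3 (p4 3) = d
    rw [hp4, Equiv.swap_apply_left, hd'd]

lemma ratio (hn : 5 ≤ n) (σ : Fin n → Fin n → (Fin m → ℤˣ))
    (hsym : ∀ a b, σ a b = σ b a) (v : Equiv.Perm (Fin n)) :
    hamMultisign σ ((v : Fin n → Fin n) ∘ (Equiv.swap (1:Fin n) 2 : Equiv.Perm (Fin n)))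
        * hamMultisign σ v
      = triMultisign σ (v 0) (v 1) (v 3) * triMultisign σ (v 0) (v 2) (v 3) := by
  classical
  set s : Equiv.Perm (Fin n) := Equiv.swap (1:Fin n) 2 with hs
  have hs0 : s 0 = 0 := Equiv.swap_apply_of_ne_of_ne (ne01 hn) (ne02 hn)
  have hs1 : s 1 = 2 := Equiv.swap_apply_left 1 2
  have hs2 : s 2 = 1 := Equiv.swap_apply_right 1 2
  have hs3 : s 3 = 3 := Equiv.swap_apply_of_ne_of_ne (Ne.symm (ne13 hn)) (Ne.symm (ne23 hn))
  unfold hamMultisign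
  rw [← Finset.prod_mul_distrib]
  rw [← Finset.prod_sdiff (Finset.subset_univ ({0, 1, 2} : Finset (Fin n)))]
  have hrest : ∏ k ∈ Finset.univ \ ({0, 1, 2} : Finset (Fin n)),
      (σ (((v : Fin n → Fin n) ∘ s) k) (((v : Fin n → Fin n) ∘ s) (k+1))
        * σ (v k) (v (k+1))) = 1 := by
    apply Finset.prod_eq_one
    intro k hk
    rw [Finset.mem_sdiff, Finset.mem_insert, Finset.mem_insert, Finset.mem_singleton] at hk
    push_neg at hk
    obtain ⟨-, hk0, hk1, hk2⟩ := hk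
    have e1 : s k = k := Equiv.swap_apply_of_ne_of_ne hk1 hk2
    have e2 : s (k+1) = k + 1 := by
      apply Equiv.swap_apply_of_ne_of_ne
      · intro h
        apply hk0
        apply add_right_cancel (b := (1:Fin n))
        rw [h, zero_add]
      · intro h
        apply hk1
        apply add_right_cancel (b := (1:Fin n))
        rw [h, one_add_one hn]
    show σ (v (s k)) (v (s (k+1))) * σ (v k) (v (k+1)) = 1
    rw [e1, e2, msq]
  rw [hrest, one_mul]
  have h012 : ∏ k ∈ ({0, 1, 2} : Finset (Fin n)),
      (σ (((v : Fin n → Fin n) ∘ s) k) (((v : Fin n → Fin n) ∘ s) (k+1))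
        * σ (v k) (v (k+1)))
      = (σ (v 0) (v 2) * σ (v 0) (v 1)) * ((σ (v 2) (v 1) * σ (v 1) (v 2))
          * (σ (v 1) (v 3) * σ (v 2) (v 3))) := by
    rw [Finset.prod_insert (by simp [ne01 hn, ne02 hn]), Finset.prod_insert (by simp [ne12 hn]),
      Finset.prod_singleton]
    show (σ (v (s 0)) (v (s (0+1))) * σ (v 0) (v (0+1)))
        * ((σ (v (s 1)) (v (s (1+1))) * σ (v 1) (v (1+1)))
        * (σ (v (s 2)) (v (s (2+1))) * σ (v 2) (v (2+1)))) = _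
    rw [zero_add, one_add_one hn, two_add_one hn, hs0, hs1, hs2, hs3]
  rw [h012]
  unfold triMultisign
  rw [hsym (v 2) (v 1), hsym (v 3) (v 0)]
  simp [mul_comm, mul_left_comm, mul_assoc, msq, msq']

lemma swap_rel (hn : 5 ≤ n) (σ : Fin n → Fin n → (Fin m → ℤˣ))
    (hsym : ∀ a b, σ a b = σ b a)
    (H : ∀ v : Fin n → Fin n, Function.Bijective v → hamMultisign σ v = 1)
    (a b c d : Fin n)
    (hab : a ≠ b) (hac : a ≠ c) (had : a ≠ d) (hbc : b ≠ c) (hbd : b ≠ d) (hcd : c ≠ d) :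
    triMultisign σ a b d = triMultisign σ a c d := by
  obtain ⟨v, h0, h1, h2, h3⟩ := exists_perm4 hn a b c d hab hac had hbc hbd hcd
  have H1 : hamMultisign σ v = 1 := H v v.bijective
  have H2 : hamMultisign σ ((v : Fin n → Fin n) ∘ (Equiv.swap (1:Fin n) 2)) = 1 :=
    H _ (v.bijective.comp (Equiv.swap (1:Fin n) 2).bijective)
  have hr := ratio hn σ hsym v
  rw [H1, H2, one_mul, h0, h1, h2, h3] at hr
  have key : triMultisign σ a b d * (triMultisign σ a b d * triMultisign σ a c d)
      = triMultisign σ a c d := msq' _ _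
  rw [← hr, mul_one] at key
  exact key

lemma tri_const (hn : 5 ≤ n) (σ : Fin n → Fin n → (Fin m → ℤˣ))
    (hsym : ∀ a b, σ a b = σ b a)
    (H : ∀ v : Fin n → Fin n, Function.Bijective v → hamMultisign σ v = 1)
    (a b c a' b' c' : Fin n)
    (hab : a ≠ b) (hbc : b ≠ c) (hac : a ≠ c)
    (ha'b' : a' ≠ b') (hb'c' : b' ≠ c') (ha'c' : a' ≠ c') :
    triMultisign σ a b c = triMultisign σ a' b' c' := by
  have step : ∀ x y z w : Fin n, x ≠ y → y ≠ z → x ≠ z → w ≠ x → w ≠ z →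
      triMultisign σ x y z = triMultisign σ x w z := by
    intro x y z w hxy hyz hxz hwx hwz
    rcases eq_or_ne w y with rfl | hwy
    · rfl
    · exact swap_rel hn σ hsym H x y w z hxy (Ne.symm hwx) hxz (Ne.symm hwy) hyz hwz
  -- Stage 1: get a triangle with value triMultisign σ a b c whose first vertex is a'
  obtain ⟨u, w, huw, ha'u, ha'w, h1⟩ :
      ∃ u w : Fin n, u ≠ w ∧ a' ≠ u ∧ a' ≠ w ∧
        triMultisign σ a b c = triMultisign σ a' u w := by
    by_cases h : a' = a
    · exact ⟨b, c, hbc, h ▸ hab, h ▸ hac, by rw [h]⟩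
    · by_cases h2 : a' = b
      · exact ⟨c, a, hac.symm, h2 ▸ hbc, h2 ▸ hab.symm, by rw [triRot, h2]⟩
      · by_cases h3 : a' = c
        · exact ⟨a, b, hab, h3 ▸ hac.symm, h3 ▸ hbc.symm,
            by rw [triRot, triRot σ b, h3]⟩
        · refine ⟨c, a, hac.symm, h3, h, ?_⟩
          rw [step a b c a' hab hbc hac h h3, triRot]
  -- Stage 2: get the second vertex to be b'
  obtain ⟨w', hb'w', ha'w2, h2⟩ :
      ∃ w' : Fin n, b' ≠ w' ∧ a' ≠ w' ∧
        triMultisign σ a b c = triMultisign σ a' b' w' := by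
    by_cases h : b' = u
    · exact ⟨w, by rw [h]; exact huw, ha'w, by rw [h1, h]⟩
    · by_cases h2 : b' = w
      · exact ⟨u, h, ha'u, by
          rw [h1, triSwap σ hsym, h2]⟩
      · exact ⟨w, h2, ha'w, by
          rw [h1, step a' u w b' ha'u huw ha'w (Ne.symm ha'b') h2]⟩
  -- Stage 3: get the third vertex to be c'
  by_cases h : w' = c'
  · rw [h2, h]
  · rw [h2, triRot, step b' w' a' c' hb'w' (Ne.symm ha'w2) (Ne.symm ha'b')
      (Ne.symm hb'c') (Ne.symm ha'c'), ← triRot]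

end MsgHelp

open MsgHelp in
/-- All Hamiltonian cycles have the identity multisign iff either all
triangles have the same non-identity multisign and `n` is even, or all
triangles have the identity multisign. -/
theorem all_ham_multisign_identity_iff (n m : ℕ) (hn : 5 ≤ n) [NeZero n]
    (σ : Fin n → Fin n → (Fin m → ℤˣ))
    (hsym : ∀ a b, σ a b = σ b a) :
    (∀ v : Fin n → Fin n, Function.Bijective v → hamMultisign σ v = 1) ↔
      ((∃ h : Fin m → ℤˣ, h ≠ 1 ∧
          (∀ a b c : Fin n, a ≠ b → b ≠ c → a ≠ c → triMultisign σ a b c = h) ∧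
          Even n) ∨
        (∀ a b c : Fin n, a ≠ b → b ≠ c → a ≠ c → triMultisign σ a b c = 1)) := by
  constructor
  · intro H
    by_cases hall : ∀ a b c : Fin n, a ≠ b → b ≠ c → a ≠ c → triMultisign σ a b c = 1
    · exact Or.inr hall
    · push_neg at hall
      obtain ⟨a, b, c, hab, hbc, hac, hne⟩ := hall
      left
      refine ⟨triMultisign σ a b c, hne,
        fun a' b' c' h1 h2 h3 => tri_const hn σ hsym H a' b' c' a b c h1 h2 h3 hab hbc hac, ?_⟩
      have Hid := H id Function.bijective_id
      rw [ham_eq_prod hn σ hsym id] at Hid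
      have hconst : ∀ k ∈ Finset.univ \ ({0, -1} : Finset (Fin n)),
          triMultisign σ (id 0) (id k) (id (k+1)) = triMultisign σ a b c := by
        intro k hk
        rw [Finset.mem_sdiff, Finset.mem_insert, Finset.mem_singleton] at hk
        push_neg at hk
        obtain ⟨-, hk0, hkm⟩ := hk
        exact tri_const hn σ hsym H 0 k (k+1) a b c (Ne.symm hk0) (succ_ne hn k)
          (Ne.symm (add_one_ne_zero hkm)) hab hbc hac
      rw [Finset.prod_congr rfl hconst, Finset.prod_const, card_sd hn] at Hid
      rcases Nat.even_or_odd (n - 2) with he | ho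
      · obtain ⟨r, hr⟩ := he
        exact ⟨r + 1, by omega⟩
      · rw [pow_odd _ (Nat.not_even_iff_odd.mpr ho)] at Hid
        exact absurd Hid hne
  · intro H v hv
    rw [ham_eq_prod hn σ hsym v]
    rcases H with ⟨h, hne, hall, heven⟩ | hall
    · have hconst : ∀ k ∈ Finset.univ \ ({0, -1} : Finset (Fin n)),
          triMultisign σ (v 0) (v k) (v (k+1)) = h := by
        intro k hk
        rw [Finset.mem_sdiff, Finset.mem_insert, Finset.mem_singleton] at hk
        push_neg at hk
        obtain ⟨-, hk0, hkm⟩ := hk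
        exact hall _ _ _ (fun hh => (Ne.symm hk0) (hv.injective hh))
          (fun hh => (succ_ne hn k) (hv.injective hh))
          (fun hh => (Ne.symm (add_one_ne_zero hkm)) (hv.injective hh))
      rw [Finset.prod_congr rfl hconst, Finset.prod_const, card_sd hn]
      apply pow_even
      obtain ⟨r, hr⟩ := heven
      exact ⟨r - 1, by omega⟩
    · apply Finset.prod_eq_one
      intro k hk
      rw [Finset.mem_sdiff, Finset.mem_insert, Finset.mem_singleton] at hk
      push_neg at hk
      obtain ⟨-, hk0, hkm⟩ := hk
      exact hall _ _ _ (fun hh => (Ne.symm hk0) (hv.injective hh))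
        (fun hh => (succ_ne hn k) (hv.injective hh))
        (fun hh => (Ne.symm (add_one_ne_zero hkm)) (hv.injective hh))
end

section
/- Let Σ be a signed complete graph on n ≥ 5 vertices (edges signed by ±1). Then: all Hamiltonian cycles of Σ are negative if and only if all triangles are negative and n is odd; and all Hamiltonian cycles are positive if and only if either all triangles are negative and n is even, or all triangles are positive. -/
/-- The sign of the Hamiltonian cycle listed by the bijection `v`. -/
def hamSign {n : ℕ} [NeZero n] (σ : Fin n → Fin n → ℤˣ)
    (v : Fin n → Fin n) : ℤˣ :=
  ∏ k : Fin n, σ (v k) (v (k + 1))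

/-- The sign of the triangle on vertices `a`, `b`, `c`. -/
def triSign {n : ℕ} (σ : Fin n → Fin n → ℤˣ) (a b c : Fin n) : ℤˣ :=
  σ a b * σ b c * σ c a

section Aux

variable {n : ℕ} [NeZero n]

lemma fv0 (hn : 5 ≤ n) : ((0:Fin n):ℕ) = 0 := rfl
lemma fv1 (hn : 5 ≤ n) : ((1:Fin n):ℕ) = 1 := by
  rw [Fin.coe_ofNat_eq_mod]; exact Nat.mod_eq_of_lt (by omega)
lemma fv2 (hn : 5 ≤ n) : ((2:Fin n):ℕ) = 2 := by
  rw [Fin.coe_ofNat_eq_mod]; exact Nat.mod_eq_of_lt (by omega)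
lemma fv3 (hn : 5 ≤ n) : ((3:Fin n):ℕ) = 3 := by
  rw [Fin.coe_ofNat_eq_mod]; exact Nat.mod_eq_of_lt (by omega)

lemma fadd01 (hn : 5 ≤ n) : (0:Fin n) + 1 = 1 := zero_add 1
lemma fadd12 (hn : 5 ≤ n) : (1:Fin n) + 1 = 2 := by
  apply Fin.ext; rw [Fin.val_add, fv1 hn, fv2 hn]; exact Nat.mod_eq_of_lt (by omega)
lemma fadd23 (hn : 5 ≤ n) : (2:Fin n) + 1 = 3 := by
  apply Fin.ext; rw [Fin.val_add, fv1 hn, fv2 hn, fv3 hn]; exact Nat.mod_eq_of_lt (by omega)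

lemma fne01 (hn : 5 ≤ n) : (0:Fin n) ≠ 1 := by
  rw [Fin.ne_iff_vne, fv0 hn, fv1 hn]; omega
lemma fne02 (hn : 5 ≤ n) : (0:Fin n) ≠ 2 := by
  rw [Fin.ne_iff_vne, fv0 hn, fv2 hn]; omega
lemma fne03 (hn : 5 ≤ n) : (0:Fin n) ≠ 3 := by
  rw [Fin.ne_iff_vne, fv0 hn, fv3 hn]; omega
lemma fne12 (hn : 5 ≤ n) : (1:Fin n) ≠ 2 := by
  rw [Fin.ne_iff_vne, fv1 hn, fv2 hn]; omega
lemma fne13 (hn : 5 ≤ n) : (1:Fin n) ≠ 3 := by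
  rw [Fin.ne_iff_vne, fv1 hn, fv3 hn]; omega
lemma fne23 (hn : 5 ≤ n) : (2:Fin n) ≠ 3 := by
  rw [Fin.ne_iff_vne, fv2 hn, fv3 hn]; omega

lemma finAddOneNe (hn : 5 ≤ n) (k : Fin n) : k + 1 ≠ k := by
  intro h
  have h2 : k + 1 = k + 0 := by rw [add_zero]; exact h
  have : (1:Fin n) = 0 := add_left_cancel h2
  exact (fne01 hn).symm this

lemma add_one_eq_one_iff (hn : 5 ≤ n) (k : Fin n) : k + 1 = 1 ↔ k = 0 := by
  constructor
  · intro h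
    nth_rewrite 2 [show (1:Fin n) = 0 + 1 from (zero_add _).symm] at h
    exact add_right_cancel h
  · rintro rfl; exact zero_add 1

lemma add_one_eq_two_iff (hn : 5 ≤ n) (k : Fin n) : k + 1 = 2 ↔ k = 1 := by
  constructor
  · intro h; rw [← fadd12 hn] at h; exact add_right_cancel h
  · rintro rfl; exact fadd12 hn

lemma add_one_eq_zero_iff (hn : 5 ≤ n) (k : Fin n) : k + 1 = 0 ↔ k = -1 := by
  rw [add_eq_zero_iff_eq_neg]

lemma neg_one_ne_zero' (hn : 5 ≤ n) : (-1 : Fin n) ≠ 0 := by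
  intro h
  have : (0:Fin n) + 1 = 0 := by rw [(add_one_eq_zero_iff hn 0), ← h]
  rw [zero_add] at this
  exact (fne01 hn).symm this

/-- squares of units of ℤ are 1 -/
lemma sq1 (u : ℤˣ) : u * u = 1 := Int.units_mul_self u

variable (σ : Fin n → Fin n → ℤˣ)

/-- A Hamiltonian cycle's sign decomposes as a product of triangle signs. -/
lemma ham_eq_prod_tri (hsym : ∀ a b, σ a b = σ b a) (v : Fin n → Fin n) :
    hamSign σ v = ∏ k : Fin n, triSign σ (v 0) (v k) (v (k + 1)) := by
  unfold hamSign triSign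
  rw [Finset.prod_mul_distrib, Finset.prod_mul_distrib]
  have h1 : (∏ k : Fin n, σ (v (k+1)) (v 0)) = ∏ k : Fin n, σ (v 0) (v k) := by
    have := Equiv.prod_comp (Equiv.addRight (1 : Fin n)) (fun k => σ (v 0) (v k))
    simp only [Equiv.coe_addRight] at this
    rw [← this]
    exact Finset.prod_congr rfl fun k _ => hsym _ _
  rw [h1, mul_right_comm, sq1, one_mul]

lemma ham_eq_pow (hn : 5 ≤ n) (hsym : ∀ a b, σ a b = σ b a) (ε : ℤˣ)
    (htri : ∀ a b c : Fin n, a ≠ b → b ≠ c → a ≠ c → triSign σ a b c = ε)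
    (v : Fin n → Fin n) (hv : Function.Injective v) :
    hamSign σ v = ε ^ (n - 2) := by
  rw [ham_eq_prod_tri σ hsym v]
  have hsub : ({0, -1} : Finset (Fin n)) ⊆ Finset.univ := Finset.subset_univ _
  rw [← Finset.prod_sdiff hsub]
  have hne : (0 : Fin n) ≠ -1 := fun h => (neg_one_ne_zero' hn) h.symm
  have hpair : (∏ k ∈ ({0, -1} : Finset (Fin n)),
      triSign σ (v 0) (v k) (v (k + 1))) = 1 := by
    have lem2 : ∀ a b c : ℤˣ, (a * b * b) * (c * c * a) = 1 := by
      intro a b c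
      rw [mul_assoc a b b, sq1 b, mul_one, sq1 c, one_mul, sq1 a]
    rw [Finset.prod_pair hne]
    unfold triSign
    rw [zero_add, neg_add_cancel, hsym (v 1) (v 0), hsym (v (-1)) (v 0)]
    exact lem2 _ _ _
  rw [hpair, mul_one]
  have hval : ∀ k ∈ Finset.univ \ ({0, -1} : Finset (Fin n)),
      triSign σ (v 0) (v k) (v (k + 1)) = ε := by
    intro k hk
    simp only [Finset.mem_sdiff, Finset.mem_insert, Finset.mem_singleton, not_or] at hk
    obtain ⟨-, hk0, hkm⟩ := hk
    have h10 : v 0 ≠ v k := fun h => hk0 (hv h).symm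
    have hk1 : k + 1 ≠ 0 := fun h => hkm ((add_one_eq_zero_iff hn k).1 h)
    have h12 : v k ≠ v (k + 1) := fun h => finAddOneNe hn k (hv h.symm)
    have h02 : v 0 ≠ v (k + 1) := fun h => hk1 ((hv h).symm)
    exact htri _ _ _ h10 h12 h02
  rw [Finset.prod_congr rfl hval, Finset.prod_const]
  congr 1
  rw [Finset.card_sdiff_of_subset hsub, Finset.card_univ, Fintype.card_fin]
  rw [Finset.card_insert_of_notMem (by simpa using hne), Finset.card_singleton]

/-- Comparing a Hamiltonian cycle with the one obtained by swapping
positions 1 and 2. -/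
lemma swap_prod (hn : 5 ≤ n) (hsym : ∀ a b, σ a b = σ b a) (v : Fin n → Fin n) :
    hamSign σ (v ∘ (Equiv.swap (1:Fin n) 2)) * hamSign σ v =
      (σ (v 0) (v 2) * σ (v 0) (v 1)) * (σ (v 1) (v 3) * σ (v 2) (v 3)) := by
  unfold hamSign
  rw [← Finset.prod_mul_distrib]
  have key : ∀ k : Fin n,
      (σ ((v ∘ (Equiv.swap (1:Fin n) 2)) k) ((v ∘ (Equiv.swap (1:Fin n) 2)) (k+1)))
        * σ (v k) (v (k+1)) =
      if k = 0 then σ (v 0) (v 2) * σ (v 0) (v 1)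
      else if k = 1 then 1
      else if k = 2 then σ (v 1) (v 3) * σ (v 2) (v 3)
      else 1 := by
    intro k
    by_cases h0 : k = 0
    · subst h0
      simp only [if_pos rfl, Function.comp_apply]
      rw [zero_add, Equiv.swap_apply_of_ne_of_ne (fne01 hn) (fne02 hn),
        Equiv.swap_apply_left]
      simp
    by_cases h1 : k = 1
    · subst h1
      simp only [if_neg h0, if_pos rfl, Function.comp_apply]
      rw [fadd12 hn, Equiv.swap_apply_left, Equiv.swap_apply_right, hsym (v 2) (v 1)]
      exact sq1 _
    by_cases h2 : k = 2
    · subst h2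
      simp only [if_neg h0, if_neg h1, if_pos rfl, Function.comp_apply]
      rw [fadd23 hn, Equiv.swap_apply_right,
        Equiv.swap_apply_of_ne_of_ne (fne13 hn).symm (fne23 hn).symm]
      simp
    · simp only [if_neg h0, if_neg h1, if_neg h2, Function.comp_apply]
      rw [Equiv.swap_apply_of_ne_of_ne h1 h2,
        Equiv.swap_apply_of_ne_of_ne (fun h => h0 ((add_one_eq_one_iff hn k).1 h))
          (fun h => h1 ((add_one_eq_two_iff hn k).1 h))]
      exact sq1 _
  have hsub : ({0, 1, 2} : Finset (Fin n)) ⊆ Finset.univ := Finset.subset_univ _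
  rw [← Finset.prod_subset hsub (by
    intro k _ hk
    simp only [Finset.mem_insert, Finset.mem_singleton, not_or] at hk
    obtain ⟨h0, h1, h2⟩ := hk
    rw [key k, if_neg h0, if_neg h1, if_neg h2])]
  have m0 : (0:Fin n) ∉ ({1, 2} : Finset (Fin n)) := by
    simp only [Finset.mem_insert, Finset.mem_singleton, not_or]
    exact ⟨fne01 hn, fne02 hn⟩
  have m1 : (1:Fin n) ∉ ({2} : Finset (Fin n)) := by
    simpa using fne12 hn
  rw [show ({0,1,2} : Finset (Fin n)) = insert 0 (insert 1 {2}) from rfl,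
    Finset.prod_insert m0, Finset.prod_insert m1, Finset.prod_singleton,
    key 0, key 1, key 2, if_pos rfl, if_neg (fne01 hn).symm, if_pos rfl,
    if_neg (fne02 hn).symm, if_neg (fne12 hn).symm, if_pos rfl, one_mul]

lemma eq_of_mul_eq_one' (x y : ℤˣ) (h : x * y = 1) : x = y := by
  have h2 : x * (x * y) = x * 1 := by rw [h]
  rw [← mul_assoc, sq1, one_mul, mul_one] at h2
  exact h2.symm

lemma exists_perm4 (hn : 5 ≤ n) (a b c d : Fin n)
    (hab : a ≠ b) (hac : a ≠ c) (had : a ≠ d) (hbc : b ≠ c) (hbd : b ≠ d)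
    (hcd : c ≠ d) :
    ∃ e : Equiv.Perm (Fin n), e 0 = a ∧ e 1 = b ∧ e 2 = c ∧ e 3 = d := by
  set E1 : Equiv.Perm (Fin n) := Equiv.swap 0 a with hE1
  have h0 : E1 0 = a := Equiv.swap_apply_left 0 a
  set b' := E1.symm b with hb'def
  have hb' : E1 b' = b := Equiv.apply_symm_apply _ _
  have hb'0 : b' ≠ 0 := fun h => hab (by rw [← h0, ← hb', h])
  set E2 : Equiv.Perm (Fin n) := E1 * Equiv.swap 1 b' with hE2
  have h20 : E2 0 = a := by
    rw [hE2, Equiv.Perm.mul_apply,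
      Equiv.swap_apply_of_ne_of_ne (fne01 hn) (Ne.symm hb'0), h0]
  have h21 : E2 1 = b := by
    rw [hE2, Equiv.Perm.mul_apply, Equiv.swap_apply_left, hb']
  set c' := E2.symm c with hc'def
  have hc' : E2 c' = c := Equiv.apply_symm_apply _ _
  have hc'0 : c' ≠ 0 := fun h => hac (by rw [← h20, ← hc', h])
  have hc'1 : c' ≠ 1 := fun h => hbc (by rw [← h21, ← hc', h])
  set E3 : Equiv.Perm (Fin n) := E2 * Equiv.swap 2 c' with hE3
  have h30 : E3 0 = a := by
    rw [hE3, Equiv.Perm.mul_apply,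
      Equiv.swap_apply_of_ne_of_ne (fne02 hn) (Ne.symm hc'0), h20]
  have h31 : E3 1 = b := by
    rw [hE3, Equiv.Perm.mul_apply,
      Equiv.swap_apply_of_ne_of_ne (fne12 hn) (Ne.symm hc'1), h21]
  have h32 : E3 2 = c := by
    rw [hE3, Equiv.Perm.mul_apply, Equiv.swap_apply_left, hc']
  set d' := E3.symm d with hd'def
  have hd' : E3 d' = d := Equiv.apply_symm_apply _ _
  have hd'0 : d' ≠ 0 := fun h => had (by rw [← h30, ← hd', h])
  have hd'1 : d' ≠ 1 := fun h => hbd (by rw [← h31, ← hd', h])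
  have hd'2 : d' ≠ 2 := fun h => hcd (by rw [← h32, ← hd', h])
  refine ⟨E3 * Equiv.swap 3 d', ?_, ?_, ?_, ?_⟩
  · rw [Equiv.Perm.mul_apply,
      Equiv.swap_apply_of_ne_of_ne (fne03 hn) (Ne.symm hd'0), h30]
  · rw [Equiv.Perm.mul_apply,
      Equiv.swap_apply_of_ne_of_ne (fne13 hn) (Ne.symm hd'1), h31]
  · rw [Equiv.Perm.mul_apply,
      Equiv.swap_apply_of_ne_of_ne (fne23 hn) (Ne.symm hd'2), h32]
  · rw [Equiv.Perm.mul_apply, Equiv.swap_apply_left, hd']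

lemma tri_rot (a b c : Fin n) : triSign σ a b c = triSign σ b c a := by
  unfold triSign; exact mul_rotate _ _ _

lemma tri_swap (hsym : ∀ a b, σ a b = σ b a) (a b c : Fin n) :
    triSign σ a b c = triSign σ a c b := by
  unfold triSign
  rw [hsym a c, hsym c b, hsym b a]
  apply Units.ext
  simp only [Units.val_mul]
  ring

lemma quad (hn : 5 ≤ n) (hsym : ∀ a b, σ a b = σ b a) (s : ℤˣ)
    (hham : ∀ v : Fin n → Fin n, Function.Bijective v → hamSign σ v = s)
    (a b c d : Fin n)
    (hab : a ≠ b) (hac : a ≠ c) (had : a ≠ d) (hbc : b ≠ c) (hbd : b ≠ d)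
    (hcd : c ≠ d) :
    (σ a c * σ a b) * (σ b d * σ c d) = 1 := by
  obtain ⟨e, h0, h1, h2, h3⟩ := exists_perm4 hn a b c d hab hac had hbc hbd hcd
  have hsw := swap_prod σ hn hsym ⇑e
  rw [hham _ e.bijective,
    hham _ (Function.Bijective.comp e.bijective (Equiv.bijective _)),
    h0, h1, h2, h3, sq1] at hsw
  exact hsw.symm

lemma L1 (hn : 5 ≤ n) (hsym : ∀ a b, σ a b = σ b a) (s : ℤˣ)
    (hham : ∀ v : Fin n → Fin n, Function.Bijective v → hamSign σ v = s)
    (a b c d : Fin n) (hab : a ≠ b) (hbc : b ≠ c) (hac : a ≠ c)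
    (hda : d ≠ a) (hdb : d ≠ b) :
    triSign σ a b c = triSign σ a b d := by
  by_cases hdc : d = c
  · rw [hdc]
  apply eq_of_mul_eq_one'
  have hq := quad σ hn hsym s hham c a b d hac.symm hbc.symm
    (fun h => hdc h.symm) hab hda.symm hdb.symm
  have hqv := congrArg Units.val hq
  have hab2 := congrArg Units.val (sq1 (σ a b))
  have e1 := congrArg Units.val (hsym c b)
  have e2 := congrArg Units.val (hsym a d)
  simp only [Units.val_mul, Units.val_one] at hqv hab2 e1 e2
  rw [e1, e2] at hqv
  apply Units.ext
  simp only [triSign, Units.val_mul, Units.val_one]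
  linear_combination ((σ b c : ℤ) * (σ c a : ℤ) * (σ b d : ℤ) * (σ d a : ℤ)) * hab2 + hqv

lemma step2 (hn : 5 ≤ n) (hsym : ∀ a b, σ a b = σ b a) (s : ℤˣ)
    (hham : ∀ v : Fin n → Fin n, Function.Bijective v → hamSign σ v = s)
    (x p q y z : Fin n) (hxp : x ≠ p) (hpq : p ≠ q) (hxq : x ≠ q)
    (hxy : x ≠ y) (hyz : y ≠ z) (hxz : x ≠ z) :
    triSign σ x p q = triSign σ x y z := by
  by_cases hyp : y = p
  · subst hyp
    exact L1 σ hn hsym s hham x y q z hxy (fun h => hpq h) hxq hxz.symm hyz.symm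
  by_cases hyq : y = q
  · subst hyq
    rw [tri_swap σ hsym x p y]
    exact L1 σ hn hsym s hham x y p z hxy (fun h => hpq h.symm) hxp hxz.symm hyz.symm
  · rw [L1 σ hn hsym s hham x p q y hxp hpq hxq hxy.symm hyp,
      tri_swap σ hsym x p y]
    exact L1 σ hn hsym s hham x y p z hxy hyp hxp hxz.symm hyz.symm

lemma tri_eq (hn : 5 ≤ n) (hsym : ∀ a b, σ a b = σ b a) (s : ℤˣ)
    (hham : ∀ v : Fin n → Fin n, Function.Bijective v → hamSign σ v = s)
    (a b c x y z : Fin n) (hab : a ≠ b) (hbc : b ≠ c) (hac : a ≠ c)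
    (hxy : x ≠ y) (hyz : y ≠ z) (hxz : x ≠ z) :
    triSign σ a b c = triSign σ x y z := by
  by_cases hxa : x = a
  · subst hxa
    exact step2 σ hn hsym s hham x b c y z hab hbc hac hxy hyz hxz
  by_cases hxb : x = b
  · subst hxb
    rw [tri_rot σ a x c]
    exact step2 σ hn hsym s hham x c a y z hbc (fun h => hac h.symm) (fun h => hab h.symm)
      hxy hyz hxz
  by_cases hxc : x = c
  · subst hxc
    rw [tri_rot σ a b x, tri_rot σ b x a]
    exact step2 σ hn hsym s hham x a b y z (Ne.symm hac) hab (Ne.symm hbc)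
      hxy hyz hxz
  · rw [L1 σ hn hsym s hham a b c x hab hbc hac (fun h => hxa h) (fun h => hxb h),
      tri_rot σ a b x, tri_rot σ b x a]
    exact step2 σ hn hsym s hham x a b y z hxa hab hxb
      hxy hyz hxz

lemma tri_const (hn : 5 ≤ n) (hsym : ∀ a b, σ a b = σ b a) (s : ℤˣ)
    (hham : ∀ v : Fin n → Fin n, Function.Bijective v → hamSign σ v = s) :
    ∃ ε : ℤˣ, (∀ a b c : Fin n, a ≠ b → b ≠ c → a ≠ c → triSign σ a b c = ε) ∧
      s = ε ^ (n - 2) := by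
  refine ⟨triSign σ 0 1 2, fun a b c hab hbc hac =>
    tri_eq σ hn hsym s hham a b c 0 1 2 hab hbc hac (fne01 hn) (fne12 hn) (fne02 hn), ?_⟩
  rw [← hham id Function.bijective_id]
  exact ham_eq_pow σ hn hsym _ (fun a b c hab hbc hac =>
    tri_eq σ hn hsym s hham a b c 0 1 2 hab hbc hac (fne01 hn) (fne12 hn) (fne02 hn))
    id Function.injective_id

end Aux

/-- Signed complete graph: all Hamiltonian cycles are negative iff all
triangles are negative and `n` is odd; all Hamiltonian cycles are positive
iff all triangles are negative and `n` is even, or all triangles are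
positive. -/
theorem signed_ham_characterization (n : ℕ) (hn : 5 ≤ n) [NeZero n]
    (σ : Fin n → Fin n → ℤˣ)
    (hsym : ∀ a b, σ a b = σ b a) :
    ((∀ v : Fin n → Fin n, Function.Bijective v → hamSign σ v = -1) ↔
      ((∀ a b c : Fin n, a ≠ b → b ≠ c → a ≠ c → triSign σ a b c = -1) ∧
        Odd n)) ∧
    ((∀ v : Fin n → Fin n, Function.Bijective v → hamSign σ v = 1) ↔
      (((∀ a b c : Fin n, a ≠ b → b ≠ c → a ≠ c → triSign σ a b c = -1) ∧
          Even n) ∨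
        (∀ a b c : Fin n, a ≠ b → b ≠ c → a ≠ c → triSign σ a b c = 1))) := by
  constructor
  · constructor
    · intro hham
      obtain ⟨ε, htri, hs⟩ := tri_const σ hn hsym (-1) hham
      rcases Int.units_eq_one_or ε with h | h
      · exfalso; rw [h, one_pow] at hs; exact (by decide : ¬((-1:ℤˣ) = 1)) hs
      · subst h
        refine ⟨htri, ?_⟩
        by_contra hodd
        rw [Nat.not_odd_iff_even, Nat.even_iff] at hodd
        have he : Even (n - 2) := Nat.even_iff.2 (by omega)
        rw [he.neg_one_pow] at hs
        exact (by decide : ¬((-1:ℤˣ) = 1)) hs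
    · rintro ⟨htri, hodd⟩ v hv
      rw [ham_eq_pow σ hn hsym (-1) htri v hv.injective]
      exact Odd.neg_one_pow (Nat.odd_iff.2 (by rw [Nat.odd_iff] at hodd; omega))
  · constructor
    · intro hham
      obtain ⟨ε, htri, hs⟩ := tri_const σ hn hsym 1 hham
      rcases Int.units_eq_one_or ε with h | h
      · right; rw [← h]; exact htri
      · left; subst h
        refine ⟨htri, ?_⟩
        by_contra heven
        rw [Nat.not_even_iff_odd, Nat.odd_iff] at heven
        have ho : Odd (n - 2) := Nat.odd_iff.2 (by omega)
        rw [ho.neg_one_pow] at hs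
        exact (by decide : ¬((1:ℤˣ) = -1)) hs
    · rintro (⟨htri, heven⟩ | htri) v hv
      · rw [ham_eq_pow σ hn hsym (-1) htri v hv.injective]
        exact Even.neg_one_pow (Nat.even_iff.2 (by rw [Nat.even_iff] at heven; omega))
      · rw [ham_eq_pow σ hn hsym 1 htri v hv.injective]
        exact one_pow _
end

section
/- Let Σ be a multisigned complete graph on n vertices (n ≥ 3) in which every triangle has multisign equal to a fixed element h of G. Then every Hamiltonian cycle of Σ has multisign h^{n−2}; in particular, since h² = e, every Hamiltonian cycle has multisign h when n is odd and multisign e when n is even. -/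
open Finset Fin.NatCast

lemma Pi.units_int_mul_self {ι : Type*} (x : ι → ℤˣ) : x * x = 1 :=
  funext fun i => Int.units_mul_self (x i)

section Parity

variable {M : Type*} [Monoid M] {h : M}

lemma pow_eq_one_of_even_of_mul_self (hh : h * h = 1) {k : ℕ} (hk : Even k) : h ^ k = 1 := by
  obtain ⟨r, rfl⟩ := hk
  rw [← two_mul, pow_mul, sq, hh, one_pow]

lemma pow_eq_self_of_odd_of_mul_self (hh : h * h = 1) {k : ℕ} (hk : Odd k) : h ^ k = h := by
  obtain ⟨r, rfl⟩ := hk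
  rw [pow_succ, pow_eq_one_of_even_of_mul_self hh (even_two_mul r), one_mul]

end Parity

section ConstantTriangles

variable {G V : Type*} [CommMonoid G] {σ : V → V → G} {h : G}

lemma prod_path_mul_chord_eq_pow (hG : ∀ x : G, x * x = 1) (hsym : ∀ a b, σ a b = σ b a)
    (htri : ∀ a b c, a ≠ b → b ≠ c → a ≠ c → σ a b * σ b c * σ c a = h)
    {w : ℕ → V} (j : ℕ) (hw : Set.InjOn w (Set.Iio (j + 2))) :
    (∏ i ∈ range (j + 1), σ (w i) (w (i + 1))) * σ (w (j + 1)) (w 0) = h ^ j := by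
  induction j with
  | zero => simpa [hsym (w 1)] using hG (σ (w 0) (w 1))
  | succ j ih =>
    have hne {a b : ℕ} (ha : a < j + 3) (hb : b < j + 3) (hab : a ≠ b) : w a ≠ w b :=
      hw.ne ha hb hab
    have hP := ih (hw.mono (Set.Iio_subset_Iio (by omega)))
    have hfan : σ (w 0) (w (j + 1)) * σ (w (j + 1)) (w (j + 2)) * σ (w (j + 2)) (w 0) = h :=
      htri _ _ _ (hne (by omega) (by omega) (by omega)) (hne (by omega) (by omega) (by omega))
        (hne (by omega) (by omega) (by omega))
    rw [hsym (w 0)] at hfan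
    set P := ∏ i ∈ range (j + 1), σ (w i) (w (i + 1))
    set chord := σ (w (j + 1)) (w 0)
    calc (∏ i ∈ range (j + 2), σ (w i) (w (i + 1))) * σ (w (j + 2)) (w 0)
        = (chord * chord) * (P * σ (w (j + 1)) (w (j + 2)) * σ (w (j + 2)) (w 0)) := by
          rw [hG, one_mul, prod_range_succ]
      _ = (P * chord) * (chord * σ (w (j + 1)) (w (j + 2)) * σ (w (j + 2)) (w 0)) := by ac_rfl
      _ = h ^ (j + 1) := by rw [hP, hfan, pow_succ]

lemma prod_cycle_eq_pow (hG : ∀ x : G, x * x = 1) (hsym : ∀ a b, σ a b = σ b a)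
    (htri : ∀ a b c, a ≠ b → b ≠ c → a ≠ c → σ a b * σ b c * σ c a = h)
    {w : ℕ → V} (j : ℕ) (hw : Set.InjOn w (Set.Iio (j + 2))) (hclosed : w (j + 2) = w 0) :
    ∏ i ∈ range (j + 2), σ (w i) (w (i + 1)) = h ^ j := by
  rw [prod_range_succ, hclosed]
  exact prod_path_mul_chord_eq_pow hG hsym htri j hw

end ConstantTriangles

lemma hamMultisign_eq_prod_range {n m : ℕ} [NeZero n] (σ : Fin n → Fin n → (Fin m → ℤˣ))
    (v : Fin n → Fin n) :
    hamMultisign σ v = ∏ i ∈ range n, σ (v (i : Fin n)) (v ((i + 1 : ℕ) : Fin n)) := by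
  rw [hamMultisign,
    ← Fin.prod_univ_eq_prod_range (fun i => σ (v (i : Fin n)) (v ((i + 1 : ℕ) : Fin n)))]
  simp

lemma Fin.natCast_injOn_Iio (n : ℕ) [NeZero n] :
    Set.InjOn (fun i : ℕ => (i : Fin n)) (Set.Iio n) := fun a ha b hb hab => by
  simpa [Fin.val_cast_of_lt ha, Fin.val_cast_of_lt hb] using congrArg Fin.val hab

/-- If every triangle has multisign `h`, then every Hamiltonian cycle has
multisign `h ^ (n - 2)`; in particular multisign `h` when `n` is odd and the
identity when `n` is even. -/
theorem ham_multisign_of_const_tri (n m : ℕ) (hn : 3 ≤ n) [NeZero n]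
    (σ : Fin n → Fin n → (Fin m → ℤˣ))
    (hsym : ∀ a b, σ a b = σ b a)
    (h : Fin m → ℤˣ)
    (htri : ∀ a b c : Fin n, a ≠ b → b ≠ c → a ≠ c → triMultisign σ a b c = h) :
    ∀ v : Fin n → Fin n, Function.Bijective v →
      hamMultisign σ v = h ^ (n - 2) ∧
      (Odd n → hamMultisign σ v = h) ∧
      (Even n → hamMultisign σ v = 1) := by
  intro v hv
  obtain ⟨j, rfl⟩ : ∃ j, n = j + 2 := ⟨n - 2, by omega⟩
  have hham : hamMultisign σ v = h ^ j := by
    rw [hamMultisign_eq_prod_range]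
    refine prod_cycle_eq_pow Pi.units_int_mul_self hsym htri (w := fun i : ℕ => v i) j
      (hv.1.comp_injOn (Fin.natCast_injOn_Iio _)) ?_
    simp
  refine ⟨by simpa using hham, fun hodd => ?_, fun heven => ?_⟩
  · exact hham.trans <| pow_eq_self_of_odd_of_mul_self (Pi.units_int_mul_self h)
      (by simpa [parity_simps] using hodd)
  · exact hham.trans <| pow_eq_one_of_even_of_mul_self (Pi.units_int_mul_self h)
      (by simpa [parity_simps] using heven)
end
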